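/- Let s ∈ (0,1), p ∈ (1,∞), N > sp, 0 < μ < sp, let V : ℝ^N → ℝ be continuous with inf_{ℝ^N} V > 0, let f satisfy (f1)–(f3), and fix ε > 0 and c ∈ ℝ. Let (u_n) be a sequence with ‖u_n‖_ε < ∞ such that J_ε(u_n) → c and ⟨J'_ε(u_n), u_n⟩ = o_n(1)·‖u_n‖_ε. Then sup_n ‖u_n‖_ε < ∞. -/

import Mathlib

/-!
Since `θ F(t) ≤ 2 f(t) t` and the Riesz potential `I(x) = ∫ F(u y)/|x-y|^μ dy` is nonnegative,
the nonlocal terms satisfy `θ Σ(u) ≤ ∬ F(u(y)) f(u(x)) u(x)/|x-y|^μ`. Hence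
`θ J_ε(u) - ⟨J'_ε(u), u⟩ ≥ (θ/p - 1) ‖u‖_ε^p`, and along the sequence the left side is
`O(1) + o(1)‖u_n‖_ε`, which bounds `‖u_n‖_ε^p` for large `n`.
-/

open MeasureTheory Filter Topology
open scoped ENNReal

noncomputable section

/-- Euclidean space `ℝ^N`. -/
abbrev Euc (N : ℕ) : Type := EuclideanSpace ℝ (Fin N)

/-- The `p`-th power of the Gagliardo seminorm `[u]_{s,p}^p`. -/
def gagliardoP (N : ℕ) (s p : ℝ) (u : Euc N → ℝ) : ℝ≥0∞ :=
  ∫⁻ x : Euc N, ∫⁻ y : Euc N,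
    ENNReal.ofReal (|u x - u y| ^ p / ‖x - y‖ ^ ((N : ℝ) + s * p))

/-- The `p`-th power of the `L^p` norm, `‖u‖_{L^p}^p`. -/
def lpP (N : ℕ) (p : ℝ) (u : Euc N → ℝ) : ℝ≥0∞ :=
  ∫⁻ x : Euc N, ENNReal.ofReal (|u x| ^ p)

/-- The `p`-th power of the norm `‖u‖_ε^p = [u]_{s,p}^p + ∫ V(εx)|u|^p dx`. -/
def normEpsP (N : ℕ) (s p ε : ℝ) (V : Euc N → ℝ) (u : Euc N → ℝ) : ℝ≥0∞ :=
  gagliardoP N s p u + ∫⁻ x : Euc N, ENNReal.ofReal (V (ε • x) * |u x| ^ p)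

/-- The primitive `F(t) = ∫_0^t f(τ) dτ`. -/
def Ffun (f : ℝ → ℝ) (t : ℝ) : ℝ := ∫ τ in (0:ℝ)..t, f τ

/-- The nonlocal term `Σ(u) = (1/2) ∬ F(u(x))F(u(y))/|x−y|^μ dx dy`. -/
def SigmaFun (N : ℕ) (μ : ℝ) (f : ℝ → ℝ) (u : Euc N → ℝ) : ℝ :=
  (1 / 2) * ∫ x : Euc N, ∫ y : Euc N, Ffun f (u x) * Ffun f (u y) / ‖x - y‖ ^ μ

/-- The energy functional `J_ε(u) = (1/p)‖u‖_ε^p − Σ(u)`. -/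
def Jfun (N : ℕ) (s p ε μ : ℝ) (V : Euc N → ℝ) (f : ℝ → ℝ) (u : Euc N → ℝ) : ℝ :=
  (1 / p) * (normEpsP N s p ε V u).toReal - SigmaFun N μ f u

/-- The derivative pairing `⟨J'_ε(u), v⟩`. -/
def Jderiv (N : ℕ) (s p ε μ : ℝ) (V : Euc N → ℝ) (f : ℝ → ℝ)
    (u v : Euc N → ℝ) : ℝ :=
  (∫ x : Euc N, ∫ y : Euc N,
      |u x - u y| ^ (p - 2) * (u x - u y) * (v x - v y) / ‖x - y‖ ^ ((N : ℝ) + s * p))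
  + (∫ x : Euc N, V (ε • x) * |u x| ^ (p - 2) * u x * v x)
  - (∫ x : Euc N, ∫ y : Euc N, Ffun f (u y) * f (u x) * v x / ‖x - y‖ ^ μ)

/-- The Nehari manifold `N_ε = {u : 0 < ‖u‖_ε < ∞, ⟨J'_ε(u), u⟩ = 0}`. -/
def Nehari (N : ℕ) (s p ε μ : ℝ) (V : Euc N → ℝ) (f : ℝ → ℝ) :
    Set (Euc N → ℝ) :=
  {u | 0 < normEpsP N s p ε V u ∧ normEpsP N s p ε V u < ⊤ ∧
    Jderiv N s p ε μ V f u u = 0}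

lemma abs_rpow_sub_two_mul_self_mul_self {p : ℝ} (hp : p ≠ 0) (a : ℝ) :
    |a| ^ (p - 2) * a * a = |a| ^ p := by
  rcases eq_or_ne a 0 with rfl | ha
  · simp [Real.zero_rpow hp]
  · calc |a| ^ (p - 2) * a * a = |a| ^ (p - 2) * |a| ^ (2 : ℝ) := by
          rw [Real.rpow_two, sq_abs]; ring
      _ = |a| ^ p := by rw [← Real.rpow_add (abs_pos.2 ha)]; norm_num

lemma rpow_le_one_add {a T : ℝ} (ha₀ : 0 ≤ a) (ha₁ : a ≤ 1) (hT : 0 ≤ T) :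
    T ^ a ≤ 1 + T := by
  rcases le_total T 1 with h | h
  · linarith [Real.rpow_le_one hT h ha₀]
  · linarith [Real.rpow_le_self_of_one_le h ha₁]

lemma integral_integral_eq_toReal_lintegral_lintegral {α β : Type*} [MeasurableSpace α]
    [MeasurableSpace β] {μ : Measure α} {ν : Measure β} [SFinite ν] {g : α → β → ℝ}
    (hg : Measurable (Function.uncurry g)) (hnn : ∀ x y, 0 ≤ g x y)
    (hfin : ∫⁻ x, ∫⁻ y, ENNReal.ofReal (g x y) ∂ν ∂μ ≠ ⊤) :
    ∫ x, ∫ y, g x y ∂ν ∂μ = (∫⁻ x, ∫⁻ y, ENNReal.ofReal (g x y) ∂ν ∂μ).toReal := by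
  have hGmeas : Measurable fun x => ∫⁻ y, ENNReal.ofReal (g x y) ∂ν :=
    (ENNReal.measurable_ofReal.comp hg).lintegral_prod_right'
  have hinner : ∀ x, ∫ y, g x y ∂ν = (∫⁻ y, ENNReal.ofReal (g x y) ∂ν).toReal := fun x =>
    integral_eq_lintegral_of_nonneg_ae (ae_of_all _ (hnn x))
      hg.of_uncurry_left.aestronglyMeasurable
  simp only [hinner]
  rw [integral_eq_lintegral_of_nonneg_ae (ae_of_all _ fun x => ENNReal.toReal_nonneg)
      hGmeas.ennreal_toReal.aestronglyMeasurable]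
  congr 1
  refine lintegral_congr_ae ?_
  filter_upwards [ae_lt_top hGmeas hfin] with x hx
  rw [ENNReal.ofReal_toReal hx.ne]

lemma iSup_lt_top_of_eventually_toReal_le {a : ℕ → ℝ≥0∞} (ha : ∀ n, a n < ⊤) {M : ℝ}
    (hM : ∀ᶠ n in atTop, (a n).toReal ≤ M) : ⨆ n, a n < ⊤ := by
  obtain ⟨B, hB⟩ := (isBoundedUnder_of_eventually_le hM).bddAbove_range
  refine lt_of_le_of_lt (iSup_le fun n => ?_) (ENNReal.ofReal_lt_top (r := B))
  rw [← ENNReal.ofReal_toReal (ha n).ne]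
  exact ENNReal.ofReal_le_ofReal (hB ⟨n, rfl⟩)

section Primitive

variable {f : ℝ → ℝ}

lemma Ffun_eq_zero_of_nonpos (hf0 : ∀ t ≤ (0 : ℝ), f t = 0) {t : ℝ} (ht : t ≤ 0) :
    Ffun f t = 0 := by
  rw [Ffun, intervalIntegral.integral_congr (g := fun _ => (0 : ℝ)) fun τ hτ => hf0 τ ?_]
  · simp
  · rcases Set.mem_uIcc.mp hτ with h | h <;> linarith [h.1, h.2]

lemma Ffun_nonneg (hf0 : ∀ t ≤ (0 : ℝ), f t = 0) {θ : ℝ} (hθ : 0 < θ)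
    (hpos : ∀ t : ℝ, 0 < t → 0 < θ * Ffun f t) (t : ℝ) : 0 ≤ Ffun f t := by
  rcases le_or_gt t 0 with h | h
  · rw [Ffun_eq_zero_of_nonpos hf0 h]
  · exact (pos_of_mul_pos_right (hpos t h) hθ.le).le

lemma mul_Ffun_le (hf0 : ∀ t ≤ (0 : ℝ), f t = 0) {θ : ℝ}
    (hle : ∀ t : ℝ, 0 < t → θ * Ffun f t ≤ 2 * f t * t) (t : ℝ) :
    θ * Ffun f t ≤ 2 * (f t * t) := by
  rcases le_or_gt t 0 with h | h
  · simp [Ffun_eq_zero_of_nonpos hf0 h, hf0 t h]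
  · linarith [hle t h]

end Primitive

def nonlocalDeriv (N : ℕ) (μ : ℝ) (f : ℝ → ℝ) (u : Euc N → ℝ) : ℝ :=
  ∫ x : Euc N, ∫ y : Euc N, Ffun f (u y) * f (u x) * u x / ‖x - y‖ ^ μ

section Functional

variable {N : ℕ} {s p ε μ : ℝ} {V : Euc N → ℝ} {f : ℝ → ℝ} {u : Euc N → ℝ}

lemma gagliardoP_toReal_eq (hp : p ≠ 0) (hu : Measurable u)
    (hfin : gagliardoP N s p u ≠ ⊤) :
    ∫ x : Euc N, ∫ y : Euc N,
        |u x - u y| ^ (p - 2) * (u x - u y) * (u x - u y) / ‖x - y‖ ^ ((N : ℝ) + s * p)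
      = (gagliardoP N s p u).toReal := by
  simp only [abs_rpow_sub_two_mul_self_mul_self hp]
  refine integral_integral_eq_toReal_lintegral_lintegral ?_ (fun x y => by positivity) hfin
  exact (((hu.comp measurable_fst).sub (hu.comp measurable_snd)).abs.pow_const _).div
    ((measurable_fst.sub measurable_snd).norm.pow_const _)

lemma weightedLp_toReal_eq (hp : p ≠ 0) (hVm : Measurable V) (hV : ∀ x, 0 ≤ V x)
    (hu : Measurable u) :
    ∫ x : Euc N, V (ε • x) * |u x| ^ (p - 2) * u x * u x
      = (∫⁻ x : Euc N, ENNReal.ofReal (V (ε • x) * |u x| ^ p)).toReal := by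
  have hpow : ∀ x, V (ε • x) * |u x| ^ (p - 2) * u x * u x = V (ε • x) * |u x| ^ p := fun x => by
    rw [mul_assoc, mul_assoc, ← mul_assoc (|u x| ^ (p - 2)), abs_rpow_sub_two_mul_self_mul_self hp]
  simp only [hpow]
  refine integral_eq_lintegral_of_nonneg_ae (ae_of_all _ fun x => ?_) ?_
  · have := hV (ε • x)
    positivity
  · exact ((hVm.comp (measurable_const_smul ε)).mul (hu.abs.pow_const _)).aestronglyMeasurable

lemma Jderiv_self (hp : p ≠ 0) (hVm : Measurable V) (hV : ∀ x, 0 ≤ V x) (hu : Measurable u)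
    (hfin : normEpsP N s p ε V u < ⊤) :
    Jderiv N s p ε μ V f u u = (normEpsP N s p ε V u).toReal - nonlocalDeriv N μ f u := by
  rw [normEpsP, ENNReal.add_lt_top] at hfin
  rw [Jderiv, nonlocalDeriv, normEpsP, ENNReal.toReal_add hfin.1.ne hfin.2.ne,
    gagliardoP_toReal_eq hp hu hfin.1.ne, weightedLp_toReal_eq hp hVm hV hu]

/-- Integrals of non-integrable functions being `0`, the comparison can only fail when the
derivative's nonlocal term vanishes for that reason; then `‖u‖_ε^p = ⟨J'_ε(u), u⟩`. -/
lemma mul_SigmaFun_le_nonlocalDeriv_or_eq_zero {θ : ℝ} (hθ : 0 ≤ θ) (hF : ∀ t, 0 ≤ Ffun f t)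
    (hFf : ∀ t, θ * Ffun f t ≤ 2 * (f t * t)) (u : Euc N → ℝ) :
    θ * SigmaFun N μ f u ≤ nonlocalDeriv N μ f u ∨ nonlocalDeriv N μ f u = 0 := by
  set I : Euc N → ℝ := fun x => ∫ y, Ffun f (u y) / ‖x - y‖ ^ μ
  have hI : ∀ x, 0 ≤ I x := fun x => integral_nonneg fun y => by have := hF (u y); positivity
  have hSigma : SigmaFun N μ f u = 1 / 2 * ∫ x, Ffun f (u x) * I x := by
    simp only [SigmaFun, I, ← integral_const_mul, mul_div_assoc]
  have hD : nonlocalDeriv N μ f u = ∫ x, f (u x) * u x * I x := by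
    simp only [nonlocalDeriv, I, ← integral_const_mul]
    congr 1 with x
    congr 1 with y
    ring
  by_cases hB : Integrable fun x => f (u x) * u x * I x
  · left
    have hpt : ∀ x, θ / 2 * (Ffun f (u x) * I x) ≤ f (u x) * u x * I x := fun x => by
      nlinarith [hFf (u x), hI x]
    calc θ * SigmaFun N μ f u = ∫ x, θ / 2 * (Ffun f (u x) * I x) := by
          rw [hSigma, integral_const_mul]; ring
      _ ≤ nonlocalDeriv N μ f u := by
          rw [hD]
          refine integral_mono_of_nonneg (ae_of_all _ fun x => ?_) hB (ae_of_all _ hpt)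
          have := hF (u x)
          have := hI x
          positivity
  · exact Or.inr (hD.trans (integral_undef hB))

end Functional

lemma le_of_energy_le_of_deriv_eq {p θ T S D η K : ℝ} (hp : 1 < p) (hθ : p < θ) (hT : 0 ≤ T)
    (hK : 0 ≤ K) (hJ : 1 / p * T - S ≤ K) (hderiv : T - D = η * T ^ (1 / p))
    (hη : |η| ≤ min (1 / 2) ((θ / p - 1) / 2)) (hSD : θ * S ≤ D ∨ D = 0) :
    T ≤ 2 * θ * K / (θ / p - 1) + 1 := by
  have hp0 : 0 < p := by linarith
  have hγ : 0 < θ / p - 1 := by rw [sub_pos, one_lt_div hp0]; exact hθ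
  have hθ0 : 0 < θ := by linarith
  have hR : |η * T ^ (1 / p)| ≤ |η| * (1 + T) := by
    rw [abs_mul, abs_of_nonneg (by positivity : 0 ≤ T ^ (1 / p))]
    exact mul_le_mul_of_nonneg_left
      (rpow_le_one_add (by positivity) ((div_le_one hp0).2 hp.le) hT) (abs_nonneg η)
  rcases hSD with hSD | hD
  · have hkey : (θ / p - 1) * T ≤ θ * K + |η| * (1 + T) := by
      have hθJ := mul_le_mul_of_nonneg_left hJ hθ0.le
      have : (θ / p - 1) * T = θ * (1 / p * T) - T := by ring
      linarith [(abs_le.1 hR).1]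
    rw [div_add_one hγ.ne', le_div_iff₀ hγ]
    nlinarith [(min_le_right _ _).trans' hη, abs_nonneg η]
  · have := mul_le_mul_of_nonneg_right ((min_le_left _ _).trans' hη) (by linarith : 0 ≤ 1 + T)
    have : 0 ≤ 2 * θ * K / (θ / p - 1) := by positivity
    linarith [(abs_le.1 hR).2]

theorem stmt_12_general {N : ℕ} {s p : ℝ} (hp : 1 < p)
    (μ : ℝ)
    (V : Euc N → ℝ) (hVc : Continuous V)
    (V₀ : ℝ) (hV₀ : 0 < V₀) (hVlb : ∀ x, V₀ ≤ V x)
    (f : ℝ → ℝ) (hf0 : ∀ t ≤ (0 : ℝ), f t = 0)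
    (θ : ℝ) (hθ : p < θ)
    (hf2 : ∀ t : ℝ, 0 < t → 0 < θ * Ffun f t ∧ θ * Ffun f t ≤ 2 * f t * t)
    (ε : ℝ) (c : ℝ)
    (u : ℕ → Euc N → ℝ) (hmeas : ∀ n, Measurable (u n))
    (hfin : ∀ n, normEpsP N s p ε V (u n) < ⊤)
    (hJ : Tendsto (fun n => Jfun N s p ε μ V f (u n)) atTop (nhds c))
    (η : ℕ → ℝ) (hη : Tendsto η atTop (nhds 0))
    (hps : ∀ n, Jderiv N s p ε μ V f (u n) (u n) =
      η n * ((normEpsP N s p ε V (u n)).toReal) ^ (1 / p)) :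
    (⨆ n, normEpsP N s p ε V (u n)) < ⊤ := by
  have hθ0 : 0 < θ := by linarith
  have hV : ∀ x, 0 ≤ V x := fun x => hV₀.le.trans (hVlb x)
  have hF := Ffun_nonneg hf0 hθ0 fun t ht => (hf2 t ht).1
  have hFf := mul_Ffun_le hf0 fun t ht => (hf2 t ht).2
  have hJ_le : ∀ᶠ n in atTop, Jfun N s p ε μ V f (u n) ≤ |c| + 1 :=
    hJ.eventually (ge_mem_nhds (by linarith [le_abs_self c]))
  have hη_small : ∀ᶠ n in atTop, |η n| ≤ min (1 / 2) ((θ / p - 1) / 2) := by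
    have hγ : 0 < θ / p - 1 := by rw [sub_pos, one_lt_div (by linarith)]; exact hθ
    have hη_abs : Tendsto (fun n => |η n|) atTop (𝓝 0) := by simpa using hη.abs
    exact hη_abs.eventually (ge_mem_nhds (by positivity))
  refine iSup_lt_top_of_eventually_toReal_le hfin (M := 2 * θ * (|c| + 1) / (θ / p - 1) + 1) ?_
  filter_upwards [hJ_le, hη_small] with n hJn hηn
  refine le_of_energy_le_of_deriv_eq hp hθ ENNReal.toReal_nonneg (by positivity) hJn ?_ hηn
    (mul_SigmaFun_le_nonlocalDeriv_or_eq_zero hθ0.le hF hFf (u n))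
  rw [← hps n, Jderiv_self (by linarith) hVc.measurable hV (hmeas n) (hfin n)]

/-- Boundedness of Palais–Smale sequences (Lemma 3.6): if `J_ε(u_n) → c` and
`⟨J'_ε(u_n), u_n⟩ = o_n(1)·‖u_n‖_ε`, then `(u_n)` is bounded in `W_ε`. -/
theorem stmt_12 {N : ℕ} {s p : ℝ} (hs0 : 0 < s) (hs1 : s < 1) (hp : 1 < p)
    (hN : s * p < (N : ℝ))
    (μ : ℝ) (hμ0 : 0 < μ) (hμ : μ < s * p)
    (V : Euc N → ℝ) (hVc : Continuous V)
    (V₀ : ℝ) (hV₀ : 0 < V₀) (hVlb : ∀ x, V₀ ≤ V x)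
    (f : ℝ → ℝ) (hfc : Continuous f) (hf0 : ∀ t ≤ (0 : ℝ), f t = 0)
    (q₁ q₂ C : ℝ) (hq₁ : p < q₁) (hq₁₂ : q₁ ≤ q₂)
    (hq₂ : q₂ < p * ((N : ℝ) - μ) / ((N : ℝ) - s * p)) (hCpos : 0 < C)
    (hf1 : ∀ t : ℝ, |f t| ≤ C * (|t| ^ (q₁ - 1) + |t| ^ (q₂ - 1)))
    (θ : ℝ) (hθ : p < θ)
    (hf2 : ∀ t : ℝ, 0 < t → 0 < θ * Ffun f t ∧ θ * Ffun f t ≤ 2 * f t * t)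
    (hf3 : StrictMonoOn (fun t : ℝ => f t / t ^ (p / 2 - 1)) (Set.Ioi 0))
    (ε : ℝ) (hε : 0 < ε) (c : ℝ)
    (u : ℕ → Euc N → ℝ) (hmeas : ∀ n, Measurable (u n))
    (hfin : ∀ n, normEpsP N s p ε V (u n) < ⊤)
    (hJ : Tendsto (fun n => Jfun N s p ε μ V f (u n)) atTop (nhds c))
    (η : ℕ → ℝ) (hη : Tendsto η atTop (nhds 0))
    (hps : ∀ n, Jderiv N s p ε μ V f (u n) (u n) =
      η n * ((normEpsP N s p ε V (u n)).toReal) ^ (1 / p)) :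
    (⨆ n, normEpsP N s p ε V (u n)) < ⊤ :=
  stmt_12_general hp μ V hVc V₀ hV₀ hVlb f hf0 θ hθ hf2 ε c u hmeas hfin hJ η hη hps
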